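/- Theorem (bidirected graph models are log-mean linear models): the distribution of a binary vector X_V satisfies the connected set Markov property with respect to a bidirected graph G (i.e., for every disconnected set D with connected components C_1,…,C_r, the subvectors X_{C_1},…,X_{C_r} are mutually independent) if and only if γ_D = 0 for every set D that is disconnected in G. -/

import Mathlib

/-!
The parameters `γ` are the Möbius transform of `log μ` on the subset lattice. For a disjoint
union `D = C₁ ∪ ⋯ ∪ Cᵣ`, inverting the Möbius relation between cell probabilities and means
inside `D` shows that independence of the blocks is equivalent to `μ_A = ∏ⱼ μ_{A ∩ Cⱼ}` for all
`A ⊆ D`, i.e. to `log μ` being a sum of functions each depending on one block only.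

If `D` is disconnected, take its connected components as blocks: the Möbius transform at `D` of a
function that ignores the coordinates outside one proper block vanishes, so `γ_D = 0`.
Conversely, if `γ` vanishes on disconnected sets, `log μ_A = ∑_{E ⊆ A} γ_E` only involves
connected `E`, and a connected subset of `D` lies in a single component, so the sum splits
along the components.
-/

open Finset

/-- Probability that the subvector `X_A` shows the cell pattern `i ⊆ A`
(coordinates in `i` equal to 1, coordinates in `A \ i` equal to 0), for a
binary random vector whose joint distribution on `{0,1}^V` is encoded by the
vector `π` indexed by subsets of `V`. -/
def cellProb {V : Type*} [Fintype V] [DecidableEq V]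
    (π : Finset V → ℝ) (A i : Finset V) : ℝ :=
  ∑ H ∈ univ.powerset.filter (fun H => H ∩ A = i), π H

/-- The mean parameter: `μ_D = P(X_D = 1_D)`. -/
def mu {V : Type*} [Fintype V] [DecidableEq V]
    (π : Finset V → ℝ) (D : Finset V) : ℝ :=
  ∑ H ∈ univ.powerset.filter (fun H => D ⊆ H), π H

/-- The log-mean linear parameter `γ_D = Σ_{E ⊆ D} (-1)^{|D\E|} log μ_E`. -/
noncomputable def gam {V : Type*} [Fintype V] [DecidableEq V]
    (π : Finset V → ℝ) (D : Finset V) : ℝ :=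
  ∑ E ∈ D.powerset, (-1 : ℝ) ^ (D \ E).card * Real.log (mu π E)

section Moebius

variable {V R : Type*} [DecidableEq V] [CommRing R]

theorem sum_Icc_neg_one_pow_card_sdiff {s t : Finset V} (hst : s ⊆ t) :
    ∑ u ∈ Icc s t, (-1 : R) ^ (u \ s).card = if s = t then 1 else 0 := by
  have hinj : Set.InjOn (s ∪ ·) (t \ s).powerset := fun a ha b hb hab => by
    have hsa : Disjoint s a := disjoint_of_subset_right (mem_powerset.1 ha) disjoint_sdiff
    have hsb : Disjoint s b := disjoint_of_subset_right (mem_powerset.1 hb) disjoint_sdiff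
    rw [← union_sdiff_cancel_left hsa, ← union_sdiff_cancel_left hsb]
    exact congrArg (· \ s) hab
  rw [Icc_eq_image_powerset hst, sum_image hinj]
  have key := congrArg (Int.cast : ℤ → R) (sum_powerset_neg_one_pow_card (x := t \ s))
  push_cast at key
  rw [sum_congr rfl fun a ha => by
    rw [union_sdiff_cancel_left (disjoint_of_subset_right (mem_powerset.1 ha) disjoint_sdiff)],
    key]
  exact if_congr
    (sdiff_eq_empty_iff_subset.trans ⟨subset_antisymm hst, fun h => h ▸ subset_rfl⟩) rfl rfl

theorem sum_powerset_sum_powerset_neg_one_pow_mul (f : Finset V → R) (A : Finset V) :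
    ∑ E ∈ A.powerset, ∑ B ∈ E.powerset, (-1) ^ (E \ B).card * f B = f A := by
  rw [sum_comm' (t' := A.powerset) (s' := fun B => Icc B A) fun E B => by
    simp only [mem_powerset, mem_Icc]
    exact ⟨fun h => ⟨⟨h.2, h.1⟩, h.2.trans h.1⟩, fun h => ⟨h.1.2, h.1.1⟩⟩]
  simp_rw [← sum_mul]
  rw [sum_congr rfl fun B hB => by rw [sum_Icc_neg_one_pow_card_sdiff (mem_powerset.1 hB)]]
  simp

theorem sum_Icc_neg_one_pow_mul_sum_Icc (f : Finset V → R) {s t : Finset V} (hst : s ⊆ t) :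
    ∑ u ∈ Icc s t, (-1) ^ (u \ s).card * ∑ w ∈ Icc u t, f w = f s := by
  simp_rw [mul_sum]
  rw [sum_comm' (t' := Icc s t) (s' := fun w => Icc s w) fun u w => by
    simp only [mem_Icc]
    exact ⟨fun h => ⟨⟨h.1.1, h.2.1⟩, h.1.1.trans h.2.1, h.2.2⟩,
      fun h => ⟨⟨h.1.1, h.1.2.trans h.2.2⟩, h.1.2, h.2.2⟩⟩]
  simp_rw [← sum_mul]
  rw [sum_congr rfl fun w hw => by rw [sum_Icc_neg_one_pow_card_sdiff (mem_Icc.1 hw).1]]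
  simp [hst]

theorem sum_powerset_neg_one_pow_mul_inter_eq_zero {D S : Finset V} (hDS : ¬D ⊆ S)
    (h : Finset V → R) : ∑ A ∈ D.powerset, (-1) ^ (D \ A).card * h (A ∩ S) = 0 := by
  obtain ⟨x, hxD, hxS⟩ := not_subset.1 hDS
  -- Adding `x ∉ S` to `A` flips the sign and leaves `A ∩ S` unchanged.
  rw [← insert_erase hxD, sum_powerset_insert (notMem_erase x D), ← sum_add_distrib]
  refine sum_eq_zero fun A hA => ?_
  have hxA : x ∉ A := fun h => notMem_erase x D (mem_powerset.1 hA h)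
  rw [insert_sdiff_of_notMem _ hxA,
    card_insert_of_notMem fun h => notMem_erase x D (mem_sdiff.1 h).1, insert_sdiff_insert,
    sdiff_insert_of_notMem (notMem_erase x D), insert_inter_of_notMem hxS,
    pow_succ]
  ring

end Moebius

section Partition

open Function

variable {ι V : Type*} [Fintype ι] [DecidableEq V] {C : ι → Finset V}

theorem biUnion_inter_of_subset_biUnion {s : Finset V} (hs : s ⊆ univ.biUnion C) :
    univ.biUnion (fun j => s ∩ C j) = s := by
  rw [← inter_biUnion, inter_eq_left.2 hs]

theorem biUnion_inter_eq_of_pairwise_disjoint (hC : Pairwise (Disjoint on C))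
    {f : ι → Finset V} (hf : ∀ j, f j ⊆ C j) (j : ι) : univ.biUnion f ∩ C j = f j := by
  ext x
  simp only [mem_inter, mem_biUnion, mem_univ, true_and]
  refine ⟨fun ⟨⟨i, hi⟩, hj⟩ => ?_, fun hx => ⟨⟨j, hx⟩, hf j hx⟩⟩
  obtain rfl | hij := eq_or_ne i j
  · exact hi
  · exact absurd hj (disjoint_left.1 (hC hij) (hf i hi))

theorem card_eq_sum_card_inter (hC : Pairwise (Disjoint on C)) {s : Finset V}
    (hs : s ⊆ univ.biUnion C) : s.card = ∑ j, (s ∩ C j).card := by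
  conv_lhs => rw [← biUnion_inter_of_subset_biUnion hs]
  exact card_biUnion fun i _ j _ hij => (hC hij).mono inter_subset_right inter_subset_right

theorem not_biUnion_subset [Nontrivial ι] (hC : Pairwise (Disjoint on C))
    (hne : ∀ j, (C j).Nonempty) (j : ι) : ¬univ.biUnion C ⊆ C j := fun h => by
  obtain ⟨i, hij⟩ := exists_ne j
  obtain ⟨x, hx⟩ := hne i
  exact disjoint_left.1 (hC hij) hx (h (subset_biUnion_of_mem C (mem_univ i) hx))

theorem sum_Icc_prod_inter {R : Type*} [CommSemiring R] [DecidableEq ι]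
    (hC : Pairwise (Disjoint on C)) {A : Finset V} (hA : A ⊆ univ.biUnion C)
    (g : ι → Finset V → R) :
    ∑ k ∈ Icc A (univ.biUnion C), ∏ j, g j (k ∩ C j) =
      ∏ j, ∑ k ∈ Icc (A ∩ C j) (C j), g j k := by
  rw [prod_univ_sum]
  refine sum_nbij' (fun k j => k ∩ C j) (univ.biUnion ·) (fun k hk => ?_) (fun f hf => ?_)
    (fun k hk => biUnion_inter_of_subset_biUnion (mem_Icc.1 hk).2) (fun f hf => ?_)
    (fun _ _ => rfl)
  · rw [Fintype.mem_piFinset]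
    exact fun j => mem_Icc.2 ⟨inter_subset_inter_right (mem_Icc.1 hk).1, inter_subset_right⟩
  · simp only [Fintype.mem_piFinset, mem_Icc] at hf
    refine mem_Icc.2 ⟨?_, biUnion_mono fun j _ => (hf j).2⟩
    rw [← biUnion_inter_of_subset_biUnion hA]
    exact biUnion_mono fun j _ => (hf j).1
  · simp only [Fintype.mem_piFinset, mem_Icc] at hf
    exact funext (biUnion_inter_eq_of_pairwise_disjoint hC fun j => (hf j).2)

end Partition

section Distribution

open Function

variable {V : Type*} [Fintype V] [DecidableEq V] {π : Finset V → ℝ}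

theorem mu_pos (hpos : ∀ H, 0 < π H) (S : Finset V) : 0 < mu π S :=
  sum_pos (fun H _ => hpos H) ⟨univ, by simp⟩

theorem gam_empty (hsum : ∑ H ∈ (univ : Finset V).powerset, π H = 1) : gam π ∅ = 0 := by
  have hmu : mu π ∅ = 1 := by rw [← hsum, mu, filter_true_of_mem fun H _ => empty_subset H]
  simp [gam, hmu]

theorem mu_eq_sum_cellProb {S D : Finset V} (hSD : S ⊆ D) :
    mu π S = ∑ i ∈ Icc S D, cellProb π D i := by
  unfold cellProb mu
  rw [sum_fiberwise_eq_sum_filter]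
  refine sum_congr (filter_congr fun H _ => ?_) fun _ _ => rfl
  rw [mem_Icc]
  exact ⟨fun h => ⟨subset_inter h hSD, inter_subset_right⟩,
    fun h => h.1.trans inter_subset_left⟩

theorem cellProb_eq_sum_mu {i D : Finset V} (hiD : i ⊆ D) :
    cellProb π D i = ∑ k ∈ Icc i D, (-1) ^ (k \ i).card * mu π k := by
  rw [sum_congr rfl fun k hk => by rw [mu_eq_sum_cellProb (mem_Icc.1 hk).2],
    sum_Icc_neg_one_pow_mul_sum_Icc _ hiD]

theorem sum_powerset_gam (A : Finset V) : ∑ E ∈ A.powerset, gam π E = Real.log (mu π A) :=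
  sum_powerset_sum_powerset_neg_one_pow_mul (fun E => Real.log (mu π E)) A

variable {ι : Type*} [Fintype ι] {C : ι → Finset V}

theorem gam_eq_zero_of_mu_eq_prod (hpos : ∀ H, 0 < π H) {D : Finset V} (hD : ∀ j, ¬D ⊆ C j)
    (hmu : ∀ A ⊆ D, mu π A = ∏ j, mu π (A ∩ C j)) : gam π D = 0 :=
  calc gam π D = ∑ A ∈ D.powerset, ∑ j, (-1) ^ (D \ A).card * Real.log (mu π (A ∩ C j)) :=
        sum_congr rfl fun A hA => by
          rw [hmu A (mem_powerset.1 hA), Real.log_prod fun j _ => (mu_pos hpos _).ne', mul_sum]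
    _ = 0 := by
        rw [sum_comm]
        exact sum_eq_zero fun j _ => sum_powerset_neg_one_pow_mul_inter_eq_zero (hD j)
          fun B => Real.log (mu π B)

variable [DecidableEq ι]

theorem mu_eq_prod_of_cellProb_eq_prod (hC : Pairwise (Disjoint on C))
    (hfac : ∀ f : ι → Finset V, (∀ j, f j ⊆ C j) →
      cellProb π (univ.biUnion C) (univ.biUnion f) = ∏ j, cellProb π (C j) (f j))
    {A : Finset V} (hA : A ⊆ univ.biUnion C) : mu π A = ∏ j, mu π (A ∩ C j) :=
  calc mu π A = ∑ i ∈ Icc A (univ.biUnion C), cellProb π (univ.biUnion C) i :=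
        mu_eq_sum_cellProb hA
    _ = ∑ i ∈ Icc A (univ.biUnion C), ∏ j, cellProb π (C j) (i ∩ C j) :=
        sum_congr rfl fun i hi => by
          conv_lhs => rw [← biUnion_inter_of_subset_biUnion (mem_Icc.1 hi).2]
          exact hfac _ fun j => inter_subset_right
    _ = ∏ j, ∑ i ∈ Icc (A ∩ C j) (C j), cellProb π (C j) i := sum_Icc_prod_inter hC hA _
    _ = ∏ j, mu π (A ∩ C j) :=
        prod_congr rfl fun j _ => (mu_eq_sum_cellProb inter_subset_right).symm

theorem cellProb_eq_prod_of_mu_eq_prod (hC : Pairwise (Disjoint on C))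
    (hmu : ∀ A ⊆ univ.biUnion C, mu π A = ∏ j, mu π (A ∩ C j))
    {f : ι → Finset V} (hf : ∀ j, f j ⊆ C j) :
    cellProb π (univ.biUnion C) (univ.biUnion f) = ∏ j, cellProb π (C j) (f j) := by
  set A := univ.biUnion f
  have hA : A ⊆ univ.biUnion C := biUnion_mono fun j _ => hf j
  have hAC : ∀ j, A ∩ C j = f j := biUnion_inter_eq_of_pairwise_disjoint hC hf
  have hsign : ∀ k ⊆ univ.biUnion C,
      (-1 : ℝ) ^ (k \ A).card = ∏ j, (-1) ^ ((k ∩ C j) \ (A ∩ C j)).card := fun k hk => by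
    rw [prod_pow_eq_pow_sum, card_eq_sum_card_inter hC (sdiff_subset.trans hk)]
    congr 2 with j
    exact congrArg card (inf_sdiff_distrib_right k A (C j))
  calc cellProb π (univ.biUnion C) A
      = ∑ k ∈ Icc A (univ.biUnion C), (-1) ^ (k \ A).card * mu π k := cellProb_eq_sum_mu hA
    _ = ∑ k ∈ Icc A (univ.biUnion C),
          ∏ j, (-1) ^ ((k ∩ C j) \ (A ∩ C j)).card * mu π (k ∩ C j) :=
        sum_congr rfl fun k hk => by
          rw [hsign k (mem_Icc.1 hk).2, hmu k (mem_Icc.1 hk).2, prod_mul_distrib]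
    _ = ∏ j, ∑ k ∈ Icc (A ∩ C j) (C j), (-1) ^ (k \ (A ∩ C j)).card * mu π k :=
        sum_Icc_prod_inter hC hA fun j k => (-1) ^ (k \ (A ∩ C j)).card * mu π k
    _ = ∏ j, cellProb π (C j) (f j) :=
        prod_congr rfl fun j _ => by rw [← cellProb_eq_sum_mu inter_subset_right, hAC]

end Distribution

section Graph

open Function

variable {V : Type*} [DecidableEq V] (G : SimpleGraph V)

theorem exists_subset_of_induce_connected {ι : Type*} [Fintype ι] {C : ι → Finset V}
    (hsep : Pairwise fun i j => ∀ u ∈ C i, ∀ v ∈ C j, ¬G.Adj u v) {E : Finset V}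
    (hE : E ⊆ univ.biUnion C) (hconn : (G.induce (E : Set V)).Connected) :
    ∃ j, E ⊆ C j := by
  obtain ⟨x⟩ := hconn.nonempty
  obtain ⟨j, -, hj⟩ := mem_biUnion.1 (hE x.2)
  suffices h : ∀ y : (E : Set V), (G.induce (E : Set V)).Reachable x y → (y : V) ∈ C j from
    ⟨j, fun u hu => h ⟨u, hu⟩ (hconn.preconnected x _)⟩
  intro y hxy
  rw [SimpleGraph.reachable_iff_reflTransGen] at hxy
  induction hxy with
  | refl => exact hj
  | @tail y z _ hyz hy =>
    obtain ⟨i, -, hi⟩ := mem_biUnion.1 (hE z.2)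
    obtain rfl | hji := eq_or_ne j i
    · exact hi
    · exact absurd hyz (hsep hji _ hy _ hi)

open Classical in
noncomputable def componentFinset (D : Finset V)
    (c : (G.induce (D : Set V)).ConnectedComponent) : Finset V :=
  D.filter fun v => ∃ h : v ∈ D, (G.induce (D : Set V)).connectedComponentMk ⟨v, h⟩ = c

variable {G} {D : Finset V} {c c' : (G.induce (D : Set V)).ConnectedComponent}

theorem mem_componentFinset {v : V} :
    v ∈ componentFinset G D c ↔
      ∃ h : v ∈ D, (G.induce (D : Set V)).connectedComponentMk ⟨v, h⟩ = c := by
  simp only [componentFinset, mem_filter, and_iff_right_iff_imp, forall_exists_index]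
  exact fun h _ => h

theorem componentFinset_nonempty : (componentFinset G D c).Nonempty := by
  obtain ⟨v, rfl⟩ := c.exists_rep
  exact ⟨v, mem_componentFinset.2 ⟨v.2, rfl⟩⟩

theorem eq_of_adj_of_mem_componentFinset {u v : V} (hu : u ∈ componentFinset G D c)
    (hv : v ∈ componentFinset G D c') (huv : G.Adj u v) : c = c' := by
  obtain ⟨hu, rfl⟩ := mem_componentFinset.1 hu
  obtain ⟨hv, rfl⟩ := mem_componentFinset.1 hv
  exact SimpleGraph.ConnectedComponent.connectedComponentMk_eq_of_adj huv

theorem induce_componentFinset_connected :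
    (G.induce (componentFinset G D c : Set V)).Connected := by
  let φ : c.toSimpleGraph →g G.induce (componentFinset G D c : Set V) :=
    { toFun := fun v => ⟨v.1.1, mem_componentFinset.2 ⟨v.1.2, v.2⟩⟩
      map_rel' := id }
  refine c.connected_toSimpleGraph.map φ fun v => ?_
  obtain ⟨hv, hc⟩ := mem_componentFinset.1 v.2
  exact ⟨⟨⟨v, hv⟩, hc⟩, rfl⟩

theorem exists_induce_connected_components (hD : D.Nonempty)
    (hnc : ¬(G.induce (D : Set V)).Connected) :
    ∃ (r : ℕ) (C : Fin r → Finset V), 2 ≤ r ∧ (∀ i, (C i).Nonempty) ∧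
      Pairwise (Disjoint on C) ∧ univ.biUnion C = D ∧
      (∀ i, (G.induce (C i : Set V)).Connected) ∧
      Pairwise fun i j => ∀ u ∈ C i, ∀ v ∈ C j, ¬G.Adj u v := by
  set H := G.induce (D : Set V)
  let e := Finite.equivFin H.ConnectedComponent
  refine ⟨_, fun i => componentFinset G D (e.symm i), ?_, fun i => componentFinset_nonempty,
    fun i j hij => disjoint_left.2 fun v hi hj => hij ?_, ?_,
    fun i => induce_componentFinset_connected,
    fun i j hij u hu v hv huv =>
      hij (e.symm.injective (eq_of_adj_of_mem_componentFinset hu hv huv))⟩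
  · have hpre : ¬H.Preconnected := fun h =>
      hnc ((SimpleGraph.connected_iff _).2 ⟨h, ⟨⟨_, hD.choose_spec⟩⟩⟩)
    obtain ⟨u, v, huv⟩ : ∃ u v, ¬H.Reachable u v := by
      simpa [SimpleGraph.Preconnected] using hpre
    have : Nontrivial H.ConnectedComponent :=
      ⟨⟨_, _, fun h => huv (SimpleGraph.ConnectedComponent.exact h)⟩⟩
    exact Finite.one_lt_card_iff_nontrivial.2 this
  · obtain ⟨_, hvi⟩ := mem_componentFinset.1 hi
    obtain ⟨_, hvj⟩ := mem_componentFinset.1 hj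
    exact e.symm.injective (hvi.symm.trans hvj)
  · ext v
    simp only [mem_biUnion, mem_univ, true_and]
    refine ⟨fun ⟨i, hi⟩ => (mem_componentFinset.1 hi).1,
      fun hv => ⟨e (H.connectedComponentMk ⟨v, hv⟩), ?_⟩⟩
    rw [e.symm_apply_apply]
    exact mem_componentFinset.2 ⟨hv, rfl⟩

end Graph

section LogMeanLinear

open Function

variable {V ι : Type*} [Fintype V] [DecidableEq V] [Fintype ι] {π : Finset V → ℝ}
  {C : ι → Finset V}

theorem mu_eq_prod_of_gam_eq_zero (G : SimpleGraph V) (hpos : ∀ H, 0 < π H)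
    (hC : Pairwise (Disjoint on C))
    (hsep : Pairwise fun i j => ∀ u ∈ C i, ∀ v ∈ C j, ¬G.Adj u v)
    (hγ : ∀ E : Finset V, ¬(G.induce (E : Set V)).Connected → gam π E = 0)
    {A : Finset V} (hA : A ⊆ univ.biUnion C) : mu π A = ∏ j, mu π (A ∩ C j) := by
  -- Only connected sets carry a nonzero `γ`, and each of them lies in exactly one block.
  have hsplit : ∀ E ∈ A.powerset, gam π E = ∑ j, if E ⊆ C j then gam π E else 0 := by
    intro E hE
    by_cases hconn : (G.induce (E : Set V)).Connected
    · obtain ⟨j, hj⟩ :=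
        exists_subset_of_induce_connected G hsep ((mem_powerset.1 hE).trans hA) hconn
      obtain ⟨⟨x, hx⟩⟩ := hconn.nonempty
      rw [sum_eq_single j (fun i _ hij => if_neg fun hi => disjoint_left.1 (hC hij) (hi hx) (hj hx))
        (by simp), if_pos hj]
    · simp [hγ E hconn]
  have hlog : Real.log (mu π A) = ∑ j, Real.log (mu π (A ∩ C j)) := by
    rw [← sum_powerset_gam, sum_congr rfl hsplit, sum_comm]
    refine sum_congr rfl fun j _ => ?_
    rw [← sum_filter, ← sum_powerset_gam]
    congr 1
    ext E
    simp only [mem_filter, mem_powerset, subset_inter_iff]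
  refine Real.log_injOn_pos (mu_pos hpos A) (prod_pos fun j _ => mu_pos hpos _) ?_
  rw [hlog, Real.log_prod fun j _ => (mu_pos hpos _).ne']

end LogMeanLinear

theorem bidirected_graph_model_is_log_mean_linear
    {V : Type*} [Fintype V] [DecidableEq V] (G : SimpleGraph V)
    (π : Finset V → ℝ) (hpos : ∀ H : Finset V, 0 < π H)
    (hsum : ∑ H ∈ (univ : Finset V).powerset, π H = 1) :
    (∀ (D : Finset V) (r : ℕ), 2 ≤ r → ∀ C : Fin r → Finset V,
        (∀ i, (C i).Nonempty) →
        (∀ i j, i ≠ j → Disjoint (C i) (C j)) →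
        univ.biUnion C = D →
        (∀ i, (G.induce (↑(C i) : Set V)).Connected) →
        (∀ i j, i ≠ j → ∀ u ∈ C i, ∀ v ∈ C j, ¬ G.Adj u v) →
        ∀ f : Fin r → Finset V, (∀ j, f j ⊆ C j) →
          cellProb π D (univ.biUnion f) = ∏ j : Fin r, cellProb π (C j) (f j)) ↔
      (∀ D : Finset V, ¬ (G.induce (↑D : Set V)).Connected → gam π D = 0) := by
  constructor
  · intro hfac D hD
    obtain rfl | hne := D.eq_empty_or_nonempty
    · exact gam_empty hsum
    obtain ⟨r, C, hr, hCne, hC, rfl, hconn, hsep⟩ := exists_induce_connected_components hne hD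
    have : Nontrivial (Fin r) := Fin.nontrivial_iff_two_le.2 hr
    exact gam_eq_zero_of_mu_eq_prod hpos (not_biUnion_subset hC hCne) fun A =>
      mu_eq_prod_of_cellProb_eq_prod hC
        (hfac _ r hr C hCne (fun _ _ h => hC h) rfl hconn fun _ _ h => hsep h)
  · rintro hγ D r - C - hC rfl - hsep f hf
    exact cellProb_eq_prod_of_mu_eq_prod (fun _ _ h => hC _ _ h)
      (fun A => mu_eq_prod_of_gam_eq_zero G hpos (fun _ _ h => hC _ _ h)
        (fun _ _ h => hsep _ _ h) hγ) hf
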